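/- arXiv:1106.5150 — 2 statements merged into one kernel-verified Lean document; each statement's English description precedes it below -/
import Mathlib

section
/- Fix a real γ > 1. For integer N ≥ 2 let S_N = (s_0, …, s_{N−1}) be the degree-maximizing sequence with exponent γ, and let A_N = #{ i ∈ {0, …, N−1} : s_i = 1 } be the number of entries equal to 1. Then lim_{N→∞} A_N / N = 1/ζ(γ), where ζ is the Riemann zeta function; in particular the number of unit-degree nodes grows linearly in N. -/
open Filter

/-- The generalized harmonic number `H_{a,b} = ∑_{t=1}^{a} t^{-b}`. -/
noncomputable def Hgen (a : ℕ) (b : ℝ) : ℝ := ∑ t ∈ Finset.Icc 1 a, (t : ℝ) ^ (-b)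

/-- The degree-maximizing sequence with exponent `γ` on `N` nodes:
`s_i = max { s ∈ {1,…,N-1} : N · ∑_{d=s}^{N-1} d^{-γ} ≥ (i+1) · H_{N-1,γ} }`. -/
noncomputable def seqS (N : ℕ) (γ : ℝ) (i : ℕ) : ℕ :=
  sSup {s : ℕ | 1 ≤ s ∧ s ≤ N - 1 ∧
    ((i : ℝ) + 1) * Hgen (N - 1) γ ≤ (N : ℝ) * ∑ d ∈ Finset.Icc s (N - 1), (d : ℝ) ^ (-γ)}

/-- The number of entries `s_i` (for `i ∈ {0,…,N-1}`) of the degree-maximizing sequence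
that are equal to `1`. -/
noncomputable def Acount (N : ℕ) (γ : ℝ) : ℕ :=
  {i : ℕ | i < N ∧ seqS N γ i = 1}.ncard

/-! Because the tail sums `∑_{d=s}^{N-1} d^{-γ}` decrease in `s`, `s_i = 1` exactly when `s = 2`
fails the defining inequality, i.e. when `N (H - 1) < (i + 1) H` for `H = H_{N-1,γ}`. So the unit
entries are the last `⌈N / H⌉` indices, `A_N = ⌈N / H_{N-1,γ}⌉`, and `A_N / N → 1 / ζ(γ)` because
`H_{N-1,γ}` is a partial sum of the Dirichlet series of `ζ(γ)`. -/

open Topology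

lemma hasSum_rpow_neg_riemannZeta_re {γ : ℝ} (hγ : 1 < γ) :
    HasSum (fun n : ℕ => (n : ℝ) ^ (-γ)) (riemannZeta γ).re := by
  have hγ' : 1 < (γ : ℂ).re := by simpa using hγ
  have h := Complex.hasSum_re (Complex.summable_one_div_nat_cpow.mpr hγ').hasSum
  rw [← zeta_eq_tsum_one_div_nat_cpow hγ'] at h
  convert h using 2 with n
  rw [Real.rpow_neg n.cast_nonneg, ← Complex.ofReal_re ((n : ℝ) ^ γ)⁻¹, Complex.ofReal_inv,
    Complex.ofReal_cpow n.cast_nonneg, Complex.ofReal_natCast, one_div]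

lemma Hgen_eq_sum_range (a : ℕ) {γ : ℝ} (hγ : γ ≠ 0) :
    Hgen a γ = ∑ t ∈ Finset.range (a + 1), (t : ℝ) ^ (-γ) := by
  rw [Finset.range_eq_Ico, Finset.Ico_add_one_right_eq_Icc,
    ← Finset.insert_Icc_add_one_left_eq_Icc a.zero_le, Finset.sum_insert (by simp), Nat.cast_zero,
    Real.zero_rpow (neg_ne_zero.mpr hγ), zero_add, zero_add, Hgen]

lemma tendsto_Hgen_riemannZeta_re {γ : ℝ} (hγ : 1 < γ) :
    Tendsto (fun N : ℕ => Hgen (N - 1) γ) atTop (𝓝 (riemannZeta γ).re) := by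
  refine (hasSum_rpow_neg_riemannZeta_re hγ).tendsto_sum_nat.congr' ?_
  filter_upwards [eventually_ge_atTop 1] with N hN
  rw [Hgen_eq_sum_range _ (by linarith), Nat.sub_add_cancel hN]

lemma Hgen_eq_one_add_sum_Icc_two {a : ℕ} (ha : 1 ≤ a) (γ : ℝ) :
    Hgen a γ = 1 + ∑ d ∈ Finset.Icc 2 a, (d : ℝ) ^ (-γ) := by
  rw [Hgen, ← Finset.insert_Icc_add_one_left_eq_Icc ha, Finset.sum_insert (by simp)]
  norm_num

lemma one_le_Hgen {a : ℕ} (ha : 1 ≤ a) (γ : ℝ) : 1 ≤ Hgen a γ := by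
  rw [Hgen_eq_one_add_sum_Icc_two ha]
  exact le_add_of_nonneg_right (Finset.sum_nonneg fun d _ => by positivity)

lemma seqS_eq_one_iff {N i : ℕ} (hN : 3 ≤ N) (hi : i < N) (γ : ℝ) :
    seqS N γ i = 1 ↔ (N : ℝ) * (Hgen (N - 1) γ - 1) < (i + 1) * Hgen (N - 1) γ := by
  have split_one := Hgen_eq_one_add_sum_Icc_two (show 1 ≤ N - 1 by omega) γ
  set H := Hgen (N - 1) γ
  set S := {s : ℕ | 1 ≤ s ∧ s ≤ N - 1 ∧
    ((i : ℝ) + 1) * H ≤ (N : ℝ) * ∑ d ∈ Finset.Icc s (N - 1), (d : ℝ) ^ (-γ)}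
  have hH : 0 ≤ H := Finset.sum_nonneg fun d _ => by positivity
  have one_mem : 1 ∈ S :=
    ⟨le_rfl, by omega, mul_le_mul_of_nonneg_right (by exact_mod_cast hi) hH⟩
  have hbdd : BddAbove S := ⟨N - 1, fun s hs => hs.2.1⟩
  have sup_mem : seqS N γ i ∈ S := Nat.sSup_mem ⟨1, one_mem⟩ hbdd
  have two_mem_of_mem {s : ℕ} (hs : s ∈ S) (h2s : 2 ≤ s) : 2 ∈ S :=
    ⟨one_le_two, by omega, hs.2.2.trans <| mul_le_mul_of_nonneg_left
      (Finset.sum_le_sum_of_subset_of_nonneg (Finset.Icc_subset_Icc_left h2s)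
        fun d _ _ => by positivity) N.cast_nonneg⟩
  have two_mem_iff : 2 ∈ S ↔ ((i : ℝ) + 1) * H ≤ N * (H - 1) := by
    rw [show H - 1 = ∑ d ∈ Finset.Icc 2 (N - 1), (d : ℝ) ^ (-γ) by linarith]
    exact ⟨fun h => h.2.2, fun h => ⟨one_le_two, by omega, h⟩⟩
  have two_le_iff : 2 ≤ seqS N γ i ↔ 2 ∈ S :=
    ⟨two_mem_of_mem sup_mem, fun h => le_csSup hbdd h⟩
  rw [← not_le, ← two_mem_iff, ← two_le_iff]
  have := sup_mem.1
  omega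

lemma ncard_lt_sub_lt_eq_natCeil {N : ℕ} {y : ℝ} (hy : y ≤ N) :
    {i : ℕ | i < N ∧ (N : ℝ) - (i + 1) < y}.ncard = ⌈y⌉₊ := by
  have hc : ⌈y⌉₊ ≤ N := Nat.ceil_le.mpr hy
  have hset : {i : ℕ | i < N ∧ (N : ℝ) - (i + 1) < y} = ↑(Finset.Ico (N - ⌈y⌉₊) N) := by
    ext i
    simp only [Set.mem_ofPred_eq, Finset.coe_Ico, Set.mem_Ico, and_comm (b := i < N)]
    refine and_congr_right fun hi => ?_
    rw [show (N : ℝ) - (i + 1) = ((N - (i + 1) : ℕ) : ℝ) by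
      rw [Nat.cast_sub (Nat.succ_le_of_lt hi)]; push_cast; ring, ← Nat.lt_ceil]
    omega
  rw [hset, Set.ncard_coe_finset, Nat.card_Ico, Nat.sub_sub_self hc]

lemma Acount_eq_natCeil {N : ℕ} (hN : 3 ≤ N) (γ : ℝ) :
    Acount N γ = ⌈N / Hgen (N - 1) γ⌉₊ := by
  have hH : 1 ≤ Hgen (N - 1) γ := one_le_Hgen (by omega) γ
  rw [Acount, ← ncard_lt_sub_lt_eq_natCeil (div_le_self N.cast_nonneg hH)]
  congr 1
  ext i
  refine and_congr_right fun hi => ?_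
  rw [seqS_eq_one_iff hN hi, lt_div_iff₀ (by linarith)]
  constructor <;> intro h <;> linarith

lemma tendsto_natCeil_mul_div_self {c : ℕ → ℝ} {L : ℝ} (hc : Tendsto c atTop (𝓝 L))
    (hc0 : ∀ N, 0 ≤ c N) : Tendsto (fun N : ℕ => (⌈N * c N⌉₊ : ℝ) / N) atTop (𝓝 L) := by
  have hupper : Tendsto (fun N : ℕ => c N + 1 / N) atTop (𝓝 L) := by
    simpa using hc.add tendsto_one_div_atTop_nhds_zero_nat
  refine tendsto_of_tendsto_of_tendsto_of_le_of_le' hc hupper ?_ ?_ <;>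
    filter_upwards [eventually_gt_atTop 0] with N hN
  · rw [le_div_iff₀ (by positivity), mul_comm]
    exact Nat.le_ceil _
  · rw [div_le_iff₀ (by positivity), add_mul, one_div_mul_cancel (by positivity), mul_comm]
    exact (Nat.ceil_lt_add_one (by have := hc0 N; positivity)).le

/-- For `γ > 1`, `lim_{N→∞} A_N / N = 1/ζ(γ)`, where `ζ` is the Riemann zeta function;
in particular, the number of unit-degree nodes grows linearly in `N`. -/
theorem unit_degree_count_gamma_gt_one (γ : ℝ) (hγ : 1 < γ) :
    Tendsto (fun N : ℕ => (Acount N γ : ℝ) / N) atTop (nhds (1 / (riemannZeta γ).re)) := by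
  have hH := tendsto_Hgen_riemannZeta_re hγ
  have hζ : 1 ≤ (riemannZeta γ).re :=
    ge_of_tendsto hH (eventually_ge_atTop 2 |>.mono fun N hN => one_le_Hgen (by omega) γ)
  have hHinv : Tendsto (fun N : ℕ => (Hgen (N - 1) γ)⁻¹) atTop (𝓝 (1 / (riemannZeta γ).re)) := by
    rw [one_div]
    exact hH.inv₀ (by linarith)
  refine (tendsto_natCeil_mul_div_self hHinv
    fun N => inv_nonneg.mpr (Finset.sum_nonneg fun _ _ => by positivity)).congr' ?_
  filter_upwards [eventually_ge_atTop 3] with N hN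
  simp only [Acount_eq_natCeil hN, div_eq_mul_inv]
end

section
/- Fix a real γ with 0 < γ < 2. Then there exists N₀ such that for every integer N ≥ N₀, the degree-maximizing sequence S_N = (s_0, …, s_{N−1}) with exponent γ is not graphical; specifically, for all N ≥ N₀ one has s_0 + s_1 > 2N − 2 − A_N, where A_N = #{ i : s_i = 1 }, violating the Erdős–Gallai condition at k = 1. Hence no large network with an unbounded power-law degree distribution with exponent strictly between 0 and 2 can be realized. -/
/-!
Write `H = H_{N-1,γ}`. Every term of a tail sum `∑_{d=s}^{N-1} d^{-γ}` is at least `N^{-γ}`, so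
`s_0` and `s_1` are both at least `N - 1 - 2 H N^γ / N`; a tail starting at `s ≥ 2` is at most
`H - 1`, so `s_i = 1` as soon as `(i + 1) H > N (H - 1)`, which makes `A_N ≥ N / H - 1`.
Comparing `H` with `∫ x^{-β}` for some `β ≤ γ` with `γ / 2 < β < 1` gives `H = O(N^{1-β})`,
hence `H² N^γ = o(N²)` and `s_0 + s_1 + A_N > 2N` for large `N`. In a simple graph a vertex of
degree one is adjacent to at most one of two given vertices, so
`d(v) + d(w) + #{u | d(u) = 1} ≤ 2N`.
-/

open Filter

open Finset

lemma Hgen_nonneg (m : ℕ) (b : ℝ) : 0 ≤ Hgen m b := sum_nonneg fun _ _ => by positivity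

lemma Hgen_eq_sum_range_s17 (m : ℕ) (b : ℝ) :
    Hgen m b = ∑ i ∈ range m, ((i : ℝ) + 1) ^ (-b) := by
  induction m with
  | zero => simp [Hgen]
  | succ m ih => rw [Hgen, sum_Icc_succ_top (by omega), ← Hgen, ih, sum_range_succ, Nat.cast_succ]

lemma one_le_Hgen_s17 {m : ℕ} (hm : 1 ≤ m) (b : ℝ) : 1 ≤ Hgen m b := by
  obtain ⟨n, rfl⟩ := Nat.exists_eq_add_of_le' hm
  rw [Hgen_eq_sum_range_s17, sum_range_succ']
  simp only [CharP.cast_eq_zero, zero_add, Real.one_rpow, le_add_iff_nonneg_left]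
  positivity

lemma Hgen_antitone (m : ℕ) : Antitone (Hgen m) := fun _ _ h =>
  sum_le_sum fun _ ht => Real.rpow_le_rpow_of_exponent_le
    (Nat.one_le_cast.mpr (mem_Icc.mp ht).1) (neg_le_neg h)

lemma Hgen_le_rpow_div {β : ℝ} (hβ0 : 0 ≤ β) (hβ1 : β < 1) (m : ℕ) :
    Hgen m β ≤ (m : ℝ) ^ (1 - β) / (1 - β) := by
  have h1β : 0 < 1 - β := by linarith
  rcases m with _ | n
  · simp [Hgen, Real.zero_rpow h1β.ne']
  have hanti : AntitoneOn (fun x : ℝ => x ^ (-β)) (Set.Icc 1 (1 + n)) := fun x hx y _ hxy =>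
    Real.rpow_le_rpow_of_nonpos (by linarith [hx.1]) hxy (by linarith)
  have hint := hanti.sum_le_integral
  rw [integral_rpow (Or.inl (by linarith)), Real.one_rpow, neg_add_eq_sub] at hint
  have hC : 1 ≤ 1 / (1 - β) := one_le_one_div h1β (by linarith)
  calc Hgen (n + 1) β = 1 + ∑ i ∈ range n, (1 + ((i + 1 : ℕ) : ℝ)) ^ (-β) := by
        simp only [Hgen_eq_sum_range_s17, sum_range_succ', Nat.cast_add, Nat.cast_zero, Nat.cast_one,
          zero_add, Real.one_rpow]
        ring_nf
    _ ≤ 1 + ((1 + n) ^ (1 - β) - 1) / (1 - β) := by gcongr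
    _ ≤ ((n + 1 : ℕ) : ℝ) ^ (1 - β) / (1 - β) := by
        rw [sub_div, add_comm (1 : ℝ) n]; push_cast; linarith

lemma Hgen_pred_le_mul_rpow {β γ : ℝ} (hβ0 : 0 ≤ β) (hβ1 : β < 1) (hβγ : β ≤ γ) (N : ℕ) :
    Hgen (N - 1) γ ≤ 1 / (1 - β) * N * (N : ℝ) ^ (-β) := by
  have h1β : 0 < 1 - β := by linarith
  calc Hgen (N - 1) γ ≤ Hgen (N - 1) β := Hgen_antitone _ hβγ
    _ ≤ ((N - 1 : ℕ) : ℝ) ^ (1 - β) / (1 - β) := Hgen_le_rpow_div hβ0 hβ1 _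
    _ ≤ (N : ℝ) ^ (1 + -β) / (1 - β) := by
        rw [← sub_eq_add_neg]; gcongr; exact_mod_cast N.sub_le 1
    _ = 1 / (1 - β) * N * (N : ℝ) ^ (-β) := by
        rw [Real.rpow_add' N.cast_nonneg (by linarith), Real.rpow_one]; ring

lemma eventually_Hgen_sq_mul_rpow_le (γ : ℝ) (h0 : 0 < γ) (h2 : γ < 2) :
    ∀ᶠ N : ℕ in atTop,
      4 * Hgen (N - 1) γ ^ 2 * (N : ℝ) ^ γ + 3 * Hgen (N - 1) γ * N ≤ (N : ℝ) ^ 2 := by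
  obtain ⟨β, hβ0, hβ1, hβγ, hγβ⟩ : ∃ β : ℝ, 0 < β ∧ β < 1 ∧ β ≤ γ ∧ γ < 2 * β :=
    ⟨min γ ((γ + 2) / 4), by positivity, by grind, min_le_left _ _, by grind⟩
  set C := 1 / (1 - β)
  have hlim : Tendsto (fun x : ℝ => 4 * C ^ 2 * x ^ (-(2 * β - γ)) + 3 * C * x ^ (-β)) atTop
      (nhds 0) := by
    have hsum := ((tendsto_rpow_neg_atTop (by linarith : 0 < 2 * β - γ)).const_mul (4 * C ^ 2)).add
      ((tendsto_rpow_neg_atTop hβ0).const_mul (3 * C))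
    rwa [mul_zero, mul_zero, add_zero] at hsum
  filter_upwards [(hlim.comp tendsto_natCast_atTop_atTop).eventually (eventually_le_nhds one_pos),
    eventually_gt_atTop 0] with N hsmall hN
  have hNpos : (0 : ℝ) < N := Nat.cast_pos.mpr hN
  set H := Hgen (N - 1) γ
  set y := (N : ℝ) ^ (-β)
  have hH : H ≤ C * N * y := Hgen_pred_le_mul_rpow hβ0.le hβ1 hβγ N
  have hy : y ^ 2 * (N : ℝ) ^ γ = (N : ℝ) ^ (-(2 * β - γ)) := by
    rw [← Real.rpow_natCast, ← Real.rpow_mul hNpos.le, ← Real.rpow_add hNpos]; ring_nf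
  have hH0 : 0 ≤ H := Hgen_nonneg _ _
  calc 4 * H ^ 2 * (N : ℝ) ^ γ + 3 * H * N
      ≤ 4 * (C * N * y) ^ 2 * (N : ℝ) ^ γ + 3 * (C * N * y) * N := by gcongr
    _ = (N : ℝ) ^ 2 * (4 * C ^ 2 * (y ^ 2 * (N : ℝ) ^ γ) + 3 * C * y) := by ring
    _ ≤ (N : ℝ) ^ 2 := by
        rw [hy]; exact mul_le_of_le_one_right (by positivity) hsmall

lemma sum_Icc_rpow_le_Hgen_sub_one {s m : ℕ} (hs : 2 ≤ s) (hm : 1 ≤ m) (b : ℝ) :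
    ∑ d ∈ Icc s m, (d : ℝ) ^ (-b) ≤ Hgen m b - 1 := by
  have h1 : 1 ∉ Icc s m := fun h => by rw [mem_Icc] at h; omega
  have hsub : insert 1 (Icc s m) ⊆ Icc 1 m := fun x hx => by
    rw [mem_insert, mem_Icc] at hx; rw [mem_Icc]; omega
  have := sum_le_sum_of_subset_of_nonneg hsub (f := fun d : ℕ => (d : ℝ) ^ (-b))
    fun d _ _ => by positivity
  rw [sum_insert h1, Nat.cast_one, Real.one_rpow] at this
  rw [Hgen]; linarith

lemma le_seqS {N i s : ℕ} {γ : ℝ} (h1 : 1 ≤ s) (h2 : s ≤ N - 1)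
    (h3 : ((i : ℝ) + 1) * Hgen (N - 1) γ ≤ N * ∑ d ∈ Icc s (N - 1), (d : ℝ) ^ (-γ)) :
    s ≤ seqS N γ i :=
  le_csSup ⟨N - 1, fun _ hx => hx.2.1⟩ ⟨h1, h2, h3⟩

lemma sub_le_seqS {N i c : ℕ} {γ : ℝ} (hγ : 0 ≤ γ) (hc : c + 2 ≤ N)
    (h : ((i : ℝ) + 1) * Hgen (N - 1) γ * (N : ℝ) ^ γ ≤ N * (c + 1)) :
    N - 1 - c ≤ seqS N γ i := by
  have hNpos : (0 : ℝ) < N := by exact_mod_cast (by omega : 0 < N)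
  have htail : (c + 1) * (N : ℝ) ^ (-γ) ≤ ∑ d ∈ Icc (N - 1 - c) (N - 1), (d : ℝ) ^ (-γ) := by
    have := card_nsmul_le_sum (Icc (N - 1 - c) (N - 1)) (fun d : ℕ => (d : ℝ) ^ (-γ))
      ((N : ℝ) ^ (-γ)) fun d hd => by
        rw [mem_Icc] at hd
        exact Real.rpow_le_rpow_of_nonpos (by exact_mod_cast (by omega : 0 < d))
          (by exact_mod_cast (by omega : d ≤ N)) (neg_nonpos.mpr hγ)
    rwa [Nat.card_Icc, show N - 1 + 1 - (N - 1 - c) = c + 1 by omega, nsmul_eq_mul,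
      Nat.cast_succ] at this
  refine le_seqS (by omega) (by omega) ?_
  calc ((i : ℝ) + 1) * Hgen (N - 1) γ
      = ((i : ℝ) + 1) * Hgen (N - 1) γ * (N : ℝ) ^ γ * (N : ℝ) ^ (-γ) := by
        rw [mul_assoc _ ((N : ℝ) ^ γ), ← Real.rpow_add hNpos, add_neg_cancel, Real.rpow_zero,
          mul_one]
    _ ≤ N * (c + 1) * (N : ℝ) ^ (-γ) := by gcongr
    _ ≤ N * ∑ d ∈ Icc (N - 1 - c) (N - 1), (d : ℝ) ^ (-γ) := by rw [mul_assoc]; gcongr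

lemma seqS_eq_one {N i : ℕ} {γ : ℝ} (hN : 2 ≤ N) (hi : i < N)
    (h : N * (Hgen (N - 1) γ - 1) < ((i : ℝ) + 1) * Hgen (N - 1) γ) :
    seqS N γ i = 1 := by
  have hiN : (i : ℝ) + 1 ≤ N := by exact_mod_cast hi
  have hmem : 1 ≤ N - 1 ∧ ((i : ℝ) + 1) * Hgen (N - 1) γ ≤ N * Hgen (N - 1) γ :=
    ⟨by omega, by gcongr; exact Hgen_nonneg _ _⟩
  refine le_antisymm (csSup_le ⟨1, le_rfl, hmem⟩ ?_) (le_seqS le_rfl hmem.1 hmem.2)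
  rintro s ⟨-, -, hs⟩
  by_contra! hs2
  have := sum_Icc_rpow_le_Hgen_sub_one hs2 (by omega : 1 ≤ N - 1) γ
  have : (N : ℝ) * ∑ d ∈ Icc s (N - 1), (d : ℝ) ^ (-γ) ≤ N * (Hgen (N - 1) γ - 1) := by gcongr
  linarith

lemma sub_le_Acount {N k : ℕ} {γ : ℝ} (hN : 2 ≤ N)
    (h : N * (Hgen (N - 1) γ - 1) < ((k : ℝ) + 1) * Hgen (N - 1) γ) :
    N - k ≤ Acount N γ := by
  have hsub : (↑(Ico k N) : Set ℕ) ⊆ {i | i < N ∧ seqS N γ i = 1} := fun i hi => by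
    rw [coe_Ico, Set.mem_Ico] at hi
    refine ⟨hi.2, seqS_eq_one hN hi.2 (h.trans_le ?_)⟩
    gcongr
    · exact Hgen_nonneg _ _
    · exact_mod_cast hi.1
  calc N - k = (↑(Ico k N) : Set ℕ).ncard := by rw [Set.ncard_coe_finset, Nat.card_Ico]
    _ ≤ Acount N γ := Set.ncard_le_ncard hsub ((Set.finite_Iio N).subset fun _ hi => hi.1)

lemma Acount_eq_card (N : ℕ) (γ : ℝ) : Acount N γ = #{i : Fin N | seqS N γ i = 1} := by
  have : {i : ℕ | i < N ∧ seqS N γ i = 1} =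
      Fin.val '' ((({i : Fin N | seqS N γ i = 1} : Finset (Fin N))) : Set (Fin N)) := by
    ext i; simp [Fin.exists_iff, and_comm]
  rw [Acount, this, Set.ncard_image_of_injective _ Fin.val_injective, Set.ncard_coe_finset]

lemma two_mul_lt_seqS_add_seqS_add_Acount {N : ℕ} {γ : ℝ} (hN : 2 ≤ N) (hγ : 0 ≤ γ)
    (hkey : 4 * Hgen (N - 1) γ ^ 2 * (N : ℝ) ^ γ + 3 * Hgen (N - 1) γ * N ≤ (N : ℝ) ^ 2) :
    2 * N < seqS N γ 0 + seqS N γ 1 + Acount N γ := by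
  set H := Hgen (N - 1) γ
  have hH : 1 ≤ H := one_le_Hgen_s17 (by omega) γ
  have hNpos : (0 : ℝ) < N := by exact_mod_cast (by omega : 0 < N)
  set c := ⌊2 * H * (N : ℝ) ^ γ / N⌋₊
  set k := ⌊N * (H - 1) / H⌋₊
  have hc : 2 * H * (N : ℝ) ^ γ ≤ N * (c + 1) := by
    have := Nat.lt_floor_add_one (2 * H * (N : ℝ) ^ γ / N)
    rw [div_lt_iff₀ hNpos] at this; linarith
  have hk : N * (H - 1) < (k + 1) * H := by
    have := Nat.lt_floor_add_one (N * (H - 1) / H)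
    rwa [div_lt_iff₀ (by linarith)] at this
  have hck : 2 * c + k + 3 ≤ N := by
    have hc' := Nat.floor_le (by positivity : 0 ≤ 2 * H * (N : ℝ) ^ γ / N)
    have hk' : (k : ℝ) ≤ N * (H - 1) / H :=
      Nat.floor_le (div_nonneg (mul_nonneg hNpos.le (sub_nonneg.mpr hH)) (by linarith))
    have : (2 * c + k + 3 : ℝ) ≤ N := by
      have e : 2 * (2 * H * (N : ℝ) ^ γ / N) + N * (H - 1) / H + 3
          = N - (N ^ 2 - (4 * H ^ 2 * (N : ℝ) ^ γ + 3 * H * N)) / (H * N) := by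
        field_simp; ring
      have : 0 ≤ (N ^ 2 - (4 * H ^ 2 * (N : ℝ) ^ γ + 3 * H * N)) / (H * N) :=
        div_nonneg (by linarith) (by positivity)
      linarith
    exact_mod_cast this
  have h0 := sub_le_seqS (i := 0) hγ (by omega : c + 2 ≤ N) (by push_cast; nlinarith)
  have h1 := sub_le_seqS (i := 1) hγ (by omega : c + 2 ≤ N) (by push_cast; nlinarith)
  have hA := sub_le_Acount hN (by exact_mod_cast hk)
  omega

theorem SimpleGraph.degree_add_degree_add_card_degree_eq_one_le {V : Type*} [Fintype V]
    (G : SimpleGraph V) [DecidableRel G.Adj] {v w : V} (hvw : v ≠ w) :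
    G.degree v + G.degree w + #{u | G.degree u = 1} ≤ 2 * Fintype.card V := by
  classical
  have hdeg (x : V) : G.degree x = ∑ u, if G.Adj x u then 1 else 0 := by
    rw [← card_neighborFinset_eq_degree, neighborFinset_eq_filter, card_filter]
  have hpair {u : V} (hv : G.Adj v u) (hw : G.Adj w u) : 2 ≤ G.degree u := by
    rw [← card_neighborFinset_eq_degree, ← card_pair hvw]
    exact card_le_card fun x hx => by
      rcases mem_insert.mp hx with rfl | hx
      · simpa using hv.symm
      · simpa [mem_singleton.mp hx] using hw.symm
  rw [hdeg v, hdeg w, card_filter, ← sum_add_distrib, ← sum_add_distrib,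
    show 2 * Fintype.card V = ∑ _u : V, 2 by simp [mul_comm]]
  refine sum_le_sum fun u _ => ?_
  split_ifs with hv hw hu <;> grind

/-- For `0 < γ < 2`, for all sufficiently large `N` the degree-maximizing sequence `S_N`
violates the Erdős–Gallai condition at `k = 1`, i.e. `s_0 + s_1 > 2N - 2 - A_N`, and
in particular `S_N` is not graphical: no large network with an unbounded power-law degree
distribution with exponent strictly between `0` and `2` can be realized. -/
theorem dense_power_law_not_graphical (γ : ℝ) (h0 : 0 < γ) (h2 : γ < 2) :
    ∃ N₀ : ℕ, ∀ N : ℕ, N₀ ≤ N →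
      ((seqS N γ 0 : ℤ) + (seqS N γ 1 : ℤ) > 2 * (N : ℤ) - 2 - (Acount N γ : ℤ)) ∧
      ¬ ∃ (G : SimpleGraph (Fin N)) (_ : DecidableRel G.Adj),
          ∀ i : Fin N, G.degree i = seqS N γ i.val := by
  obtain ⟨N₀, hN₀⟩ := eventually_atTop.mp (eventually_Hgen_sq_mul_rpow_le γ h0 h2)
  refine ⟨max 2 N₀, fun N hN => ?_⟩
  have hgt := two_mul_lt_seqS_add_seqS_add_Acount (le_of_max_le_left hN) h0.le
    (hN₀ N (le_of_max_le_right hN))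
  refine ⟨by omega, ?_⟩
  rintro ⟨G, _, hG⟩
  have hle := G.degree_add_degree_add_card_degree_eq_one_le
    (v := ⟨0, by omega⟩) (w := ⟨1, by omega⟩) (by simp)
  simp only [hG, Fintype.card_fin, ← Acount_eq_card] at hle
  omega
end
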